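/- arXiv:2105.11569 — 13 statements merged into one kernel-verified Lean document; each statement's English description precedes it below -/
import Mathlib

section
/- Let f, g : ℝ → ℝ. Assume: (i) g is strictly decreasing in distance; (ii) f is strictly increasing on [−1,1]; (iii) f is strictly midpoint-concave at positive midpoints on [−1,1]; (iv) f is strictly midpoint-convex at negative midpoints on [−1,1]; (v) f is midpoint-odd on [−1,1]. Define the influence weight c(x,y) = g(f(x) − f(y)). Then for all x_i, x_j, x_d ∈ [−1,1]: (1) if (x_j − x_i)(x_d − x_i) > 0 and |x_j − x_i| < |x_d − x_i| then c(x_i, x_j) > c(x_i, x_d); (2) if |x_j − x_i| = |x_d − x_i| and x_i·x_j > x_i·x_d then c(x_i, x_j) > c(x_i, x_d); (3) c(0, u) = c(0, −u) for all u ∈ [−1,1]. -/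
/-!
Since `g` is even and strictly decreasing in `|·|`, each claim compares two `f`-distances
`|f xᵢ - f y|`. Claim (1) is strict monotonicity of `f`. In claim (2) the two equidistant
opinions have `xᵢ` as their midpoint, and the sign of `xᵢ` selects midpoint concavity or
convexity of `f`, which says exactly which of the two `f`-distances is smaller.
Claim (3) is midpoint oddness: `f 0 - f u = -(f 0 - f (-u))`.
-/

open Set

namespace StrictMonoOn

variable {f : ℝ → ℝ} {s : Set ℝ}

theorem abs_sub_lt_abs_sub_of_same_side (hf : StrictMonoOn f s) {x y z : ℝ}
    (hx : x ∈ s) (hy : y ∈ s) (hz : z ∈ s) (hside : 0 < (y - x) * (z - x))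
    (hdist : |y - x| < |z - x|) : |f x - f y| < |f x - f z| := by
  rcases mul_pos_iff.mp hside with ⟨hyx, hzx⟩ | ⟨hyx, hzx⟩
  · rw [abs_of_pos hyx, abs_of_pos hzx] at hdist
    have hfxy := hf hx hy (by linarith)
    have hfyz := hf hy hz (by linarith)
    rw [abs_of_neg (by linarith), abs_of_neg (by linarith)]
    linarith
  · rw [abs_of_neg hyx, abs_of_neg hzx] at hdist
    have hfyx := hf hy hx (by linarith)
    have hfzy := hf hz hy (by linarith)
    rw [abs_of_pos (by linarith), abs_of_pos (by linarith)]
    linarith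

theorem abs_sub_lt_abs_sub_of_midpoint_lt (hf : StrictMonoOn f s) {a m b : ℝ}
    (ha : a ∈ s) (hm : m ∈ s) (hb : b ∈ s) (ham : a < m) (hmb : m < b)
    (hmid : (f a + f b) / 2 < f m) : |f m - f b| < |f m - f a| := by
  rw [abs_of_neg (by linarith [hf hm hb hmb]), abs_of_pos (by linarith [hf ha hm ham])]
  linarith

theorem abs_sub_lt_abs_sub_of_lt_midpoint (hf : StrictMonoOn f s) {a m b : ℝ}
    (ha : a ∈ s) (hm : m ∈ s) (hb : b ∈ s) (ham : a < m) (hmb : m < b)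
    (hmid : f m < (f a + f b) / 2) : |f m - f a| < |f m - f b| := by
  rw [abs_of_pos (by linarith [hf ha hm ham]), abs_of_neg (by linarith [hf hm hb hmb])]
  linarith

end StrictMonoOn

theorem eq_midpoint_of_abs_sub_eq_abs_sub {x y z : ℝ} (h : |y - x| = |z - x|) (hyz : y ≠ z) :
    (y + z) / 2 = x := by
  rcases abs_eq_abs.mp h with h | h
  · exact absurd (by linarith) hyz
  · linarith

/-- Sufficiency direction of Theorem 1: under the stated conditions on `g` and `f`,
the influence weight `c(x,y) = g (f x - f y)` satisfies the asymmetric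
confirmation bias conditions. -/
theorem stmt_0 (f g : ℝ → ℝ)
    (hgsym : ∀ a : ℝ, g a = g (-a))
    (hgdec : ∀ a b : ℝ, |a| < |b| → g b < g a)
    (hfmono : ∀ x ∈ Set.Icc (-1:ℝ) 1, ∀ y ∈ Set.Icc (-1:ℝ) 1, x < y → f x < f y)
    (hfconc : ∀ p ∈ Set.Icc (-1:ℝ) 1, ∀ q ∈ Set.Icc (-1:ℝ) 1,
      q < p → 0 < (p + q) / 2 → (f p + f q) / 2 < f ((p + q) / 2))
    (hfconv : ∀ p ∈ Set.Icc (-1:ℝ) 1, ∀ q ∈ Set.Icc (-1:ℝ) 1,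
      q < p → (p + q) / 2 < 0 → f ((p + q) / 2) < (f p + f q) / 2)
    (hfodd : ∀ u ∈ Set.Icc (-1:ℝ) 1, f 0 = (f u + f (-u)) / 2) :
    (∀ xi ∈ Set.Icc (-1:ℝ) 1, ∀ xj ∈ Set.Icc (-1:ℝ) 1, ∀ xd ∈ Set.Icc (-1:ℝ) 1,
      ((xj - xi) * (xd - xi) > 0 → |xj - xi| < |xd - xi| →
        g (f xi - f xj) > g (f xi - f xd)) ∧
      (|xj - xi| = |xd - xi| → xi * xj > xi * xd →
        g (f xi - f xj) > g (f xi - f xd))) ∧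
    (∀ u ∈ Set.Icc (-1:ℝ) 1, g (f 0 - f u) = g (f 0 - f (-u))) := by
  have hf : StrictMonoOn f (Icc (-1) 1) := fun x hx y hy => hfmono x hx y hy
  refine ⟨fun xi hi xj hj xd hd => ⟨fun hside hdist => ?_, fun hdist hgt => ?_⟩, fun u hu => ?_⟩
  · exact hgdec _ _ (hf.abs_sub_lt_abs_sub_of_same_side hi hj hd hside hdist)
  · have hmid := eq_midpoint_of_abs_sub_eq_abs_sub hdist (by rintro rfl; exact lt_irrefl _ hgt)
    apply hgdec
    rcases lt_trichotomy xi 0 with hneg | hzero | hpos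
    · have hjd : xj < xd := by nlinarith
      have hconv := hfconv xd hd xj hj hjd (by linarith)
      rw [add_comm, hmid] at hconv
      exact hf.abs_sub_lt_abs_sub_of_lt_midpoint hj hi hd (by linarith) (by linarith)
        (by linarith)
    · simp [hzero] at hgt
    · have hdj : xd < xj := by nlinarith
      have hconc := hfconc xj hj xd hd hdj (by linarith)
      rw [hmid] at hconc
      exact hf.abs_sub_lt_abs_sub_of_midpoint_lt hd hi hj (by linarith) (by linarith)
        (by linarith)
  · rw [show f 0 - f u = -(f 0 - f (-u)) by linarith [hfodd u hu], ← hgsym]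
end

section
/- Let f, g : ℝ → ℝ. Assume: (i) g is strictly increasing in distance; (ii) f is strictly increasing on [−1,1]; (iii) f is strictly midpoint-concave at positive midpoints on [−1,1]; (iv) f is strictly midpoint-convex at negative midpoints on [−1,1]; (v) f is midpoint-odd on [−1,1]. Define the influence weight c̄(x̄,y) = g(f(x̄) − f(y)). Then for all x̄, x_j, x_d ∈ [−1,1]: (1) if (x_j − x̄)(x_d − x̄) > 0 and |x_j − x̄| > |x_d − x̄| then c̄(x̄, x_j) > c̄(x̄, x_d); (2) if |x_j − x̄| = |x_d − x̄| and x̄·x_j < x̄·x_d then c̄(x̄, x_j) > c̄(x̄, x_d); (3) c̄(0, u) = c̄(0, −u) for all u ∈ [−1,1]. -/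
/-! Since `g` is strictly increasing in distance, each claim about weights is a claim comparing
`|f x̄ - f y|` for two opinions `y`. Strict monotonicity of `f` alone handles two opinions on the
same side of `x̄`. Two opinions at equal distance on opposite sides have `x̄` as their midpoint;
strict midpoint-concavity at a positive `x̄` puts `f x̄` nearer to `f` of the opinion farther from
the origin, so the one closer to `0` gets the larger weight, and convexity gives the mirror image
for negative `x̄`. Midpoint-oddness makes `f 0 - f u` and `f 0 - f (-u)` opposite, which `g`
cannot distinguish. -/

namespace StrictMonoOn

variable {f : ℝ → ℝ} {s : Set ℝ}

theorem abs_sub_lt_abs_sub_of_same_side_s1 (hf : StrictMonoOn f s) {a b c : ℝ}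
    (ha : a ∈ s) (hb : b ∈ s) (hc : c ∈ s) (hside : 0 < (c - a) * (b - a))
    (hfar : |b - a| < |c - a|) : |f a - f b| < |f a - f c| := by
  rcases mul_pos_iff.mp hside with ⟨hca, hba⟩ | ⟨hca, hba⟩
  · rw [abs_of_pos hba, abs_of_pos hca] at hfar
    have hab := hf ha hb (by linarith)
    have hbc := hf hb hc (by linarith)
    rw [abs_of_neg (by linarith), abs_of_neg (by linarith)]
    linarith
  · rw [abs_of_neg hba, abs_of_neg hca] at hfar
    have hba' := hf hb ha (by linarith)
    have hcb := hf hc hb (by linarith)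
    rw [abs_of_pos (by linarith), abs_of_pos (by linarith)]
    linarith

theorem abs_sub_lt_of_midpoint_concave (hf : StrictMonoOn f s) {p q : ℝ}
    (hp : p ∈ s) (hq : q ∈ s) (hm : (p + q) / 2 ∈ s) (hqp : q < p)
    (hconc : (f p + f q) / 2 < f ((p + q) / 2)) :
    |f ((p + q) / 2) - f p| < |f ((p + q) / 2) - f q| := by
  have hqm := hf hq hm (by linarith)
  have hmp := hf hm hp (by linarith)
  rw [abs_of_neg (by linarith), abs_of_pos (by linarith)]
  linarith

theorem abs_sub_lt_of_midpoint_convex (hf : StrictMonoOn f s) {p q : ℝ}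
    (hp : p ∈ s) (hq : q ∈ s) (hm : (p + q) / 2 ∈ s) (hqp : q < p)
    (hconv : f ((p + q) / 2) < (f p + f q) / 2) :
    |f ((p + q) / 2) - f q| < |f ((p + q) / 2) - f p| := by
  have hqm := hf hq hm (by linarith)
  have hmp := hf hm hp (by linarith)
  rw [abs_of_pos (by linarith), abs_of_neg (by linarith)]
  linarith

theorem abs_sub_lt_abs_sub_of_equidistant (hf : StrictMonoOn f s)
    (hconc : ∀ p ∈ s, ∀ q ∈ s, q < p → 0 < (p + q) / 2 → (f p + f q) / 2 < f ((p + q) / 2))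
    (hconv : ∀ p ∈ s, ∀ q ∈ s, q < p → (p + q) / 2 < 0 → f ((p + q) / 2) < (f p + f q) / 2)
    {a b c : ℝ} (ha : a ∈ s) (hb : b ∈ s) (hc : c ∈ s) (heq : |c - a| = |b - a|)
    (hlt : a * c < a * b) : |f a - f b| < |f a - f c| := by
  have hcb : c ≠ b := by
    rintro rfl
    exact lt_irrefl _ hlt
  have hmid : a = (b + c) / 2 := by
    rcases abs_eq_abs.mp heq with h | h
    · exact absurd (by linarith) hcb
    · linarith
  subst hmid
  have hsign : 0 < (b + c) / 2 * (b - c) := by linarith [mul_sub ((b + c) / 2) b c]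
  rcases mul_pos_iff.mp hsign with ⟨hpos, hcb'⟩ | ⟨hneg, hbc⟩
  · exact hf.abs_sub_lt_of_midpoint_concave hb hc ha (by linarith) (hconc b hb c hc (by linarith) hpos)
  · have ha' : (c + b) / 2 ∈ s := by rwa [add_comm]
    have key := hf.abs_sub_lt_of_midpoint_convex hc hb ha' (by linarith)
      (hconv c hc b hb (by linarith) (by linarith))
    rwa [add_comm c b] at key

end StrictMonoOn

/-- Sufficiency direction of Theorem 2: under the stated conditions on `g` and `f`,
the influence weight `c̄(x̄,y) = g (f x̄ - f y)` satisfies the asymmetric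
negativity bias conditions. -/
theorem stmt_1 (f g : ℝ → ℝ)
    (hgsym : ∀ a : ℝ, g a = g (-a))
    (hginc : ∀ a b : ℝ, |a| < |b| → g a < g b)
    (hfmono : ∀ x ∈ Set.Icc (-1:ℝ) 1, ∀ y ∈ Set.Icc (-1:ℝ) 1, x < y → f x < f y)
    (hfconc : ∀ p ∈ Set.Icc (-1:ℝ) 1, ∀ q ∈ Set.Icc (-1:ℝ) 1,
      q < p → 0 < (p + q) / 2 → (f p + f q) / 2 < f ((p + q) / 2))
    (hfconv : ∀ p ∈ Set.Icc (-1:ℝ) 1, ∀ q ∈ Set.Icc (-1:ℝ) 1,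
      q < p → (p + q) / 2 < 0 → f ((p + q) / 2) < (f p + f q) / 2)
    (hfodd : ∀ u ∈ Set.Icc (-1:ℝ) 1, f 0 = (f u + f (-u)) / 2) :
    (∀ xbar ∈ Set.Icc (-1:ℝ) 1, ∀ xj ∈ Set.Icc (-1:ℝ) 1, ∀ xd ∈ Set.Icc (-1:ℝ) 1,
      ((xj - xbar) * (xd - xbar) > 0 → |xj - xbar| > |xd - xbar| →
        g (f xbar - f xj) > g (f xbar - f xd)) ∧
      (|xj - xbar| = |xd - xbar| → xbar * xj < xbar * xd →
        g (f xbar - f xj) > g (f xbar - f xd))) ∧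
    (∀ u ∈ Set.Icc (-1:ℝ) 1, g (f 0 - f u) = g (f 0 - f (-u))) := by
  have hmono : StrictMonoOn f (Set.Icc (-1) 1) := fun x hx y hy => hfmono x hx y hy
  refine ⟨fun xbar hx xj hj xd hd => ⟨fun hside hfar => ?_, fun heq hlt => ?_⟩, fun u hu => ?_⟩
  · exact hginc _ _ (hmono.abs_sub_lt_abs_sub_of_same_side_s1 hx hd hj hside hfar)
  · exact hginc _ _ (hmono.abs_sub_lt_abs_sub_of_equidistant hfconc hfconv hx hd hj heq hlt)
  · have hopp : f 0 - f u = -(f 0 - f (-u)) := by linarith [hfodd u hu]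
    rw [hopp, ← hgsym]
end

section
/- Let f, g : ℝ → ℝ with g strictly decreasing in distance, f strictly increasing on [−1,1], and f strictly midpoint-concave at positive midpoints on [−1,1]. Then for all x_i, x_j, x_d ∈ [−1,1] with x_i > 0 and x_j − x_i = x_i − x_d > 0, one has g(f(x_i) − f(x_j)) > g(f(x_i) − f(x_d)). -/
/-! The individual opinion `xi` is the midpoint of `xd < xj`, so strict midpoint-concavity puts
`f xi` strictly closer to `f xj` than to `f xd`; monotonicity of `f` fixes the signs of the two
differences, and `g` rewards the smaller distance. -/

lemma abs_sub_lt_abs_sub_of_lt_of_add_lt {a b c : ℝ} (hca : c < a) (hab : a < b)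
    (hconc : (b + c) / 2 < a) : |a - b| < |a - c| := by
  rw [abs_of_neg (sub_neg.mpr hab), abs_of_pos (sub_pos.mpr hca)]
  linarith

theorem stmt_3_general (f g : ℝ → ℝ)
    (hgdec : ∀ a b : ℝ, |a| < |b| → g b < g a)
    (hfmono : ∀ x ∈ Set.Icc (-1:ℝ) 1, ∀ y ∈ Set.Icc (-1:ℝ) 1, x < y → f x < f y)
    (hfconc : ∀ p ∈ Set.Icc (-1:ℝ) 1, ∀ q ∈ Set.Icc (-1:ℝ) 1,
      q < p → 0 < (p + q) / 2 → (f p + f q) / 2 < f ((p + q) / 2)) :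
    ∀ xi ∈ Set.Icc (-1:ℝ) 1, ∀ xj ∈ Set.Icc (-1:ℝ) 1, ∀ xd ∈ Set.Icc (-1:ℝ) 1,
      xi > 0 → xj - xi = xi - xd → xj - xi > 0 →
        g (f xi - f xj) > g (f xi - f xd) := by
  intro xi hxi xj hxj xd hxd hpos heq hgt
  have hmid : (xj + xd) / 2 = xi := by linarith
  have hconc : (f xj + f xd) / 2 < f xi := hmid ▸ hfconc xj hxj xd hxd (by linarith) (hmid ▸ hpos)
  exact hgdec _ _ <| abs_sub_lt_abs_sub_of_lt_of_add_lt
    (hfmono xd hxd xi hxi (by linarith)) (hfmono xi hxi xj hxj (by linarith)) hconc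

/-- Equidistant case with positive individual opinion (second item of the
asymmetric confirmation bias condition, sufficiency proof of Theorem 1). -/
theorem stmt_3 (f g : ℝ → ℝ)
    (hgsym : ∀ a : ℝ, g a = g (-a))
    (hgdec : ∀ a b : ℝ, |a| < |b| → g b < g a)
    (hfmono : ∀ x ∈ Set.Icc (-1:ℝ) 1, ∀ y ∈ Set.Icc (-1:ℝ) 1, x < y → f x < f y)
    (hfconc : ∀ p ∈ Set.Icc (-1:ℝ) 1, ∀ q ∈ Set.Icc (-1:ℝ) 1,
      q < p → 0 < (p + q) / 2 → (f p + f q) / 2 < f ((p + q) / 2)) :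
    ∀ xi ∈ Set.Icc (-1:ℝ) 1, ∀ xj ∈ Set.Icc (-1:ℝ) 1, ∀ xd ∈ Set.Icc (-1:ℝ) 1,
      xi > 0 → xj - xi = xi - xd → xj - xi > 0 →
        g (f xi - f xj) > g (f xi - f xd) :=
  stmt_3_general f g hgdec hfmono hfconc
end

section
/- Let f, g : ℝ → ℝ with g strictly decreasing in distance, f strictly increasing on [−1,1], and f strictly midpoint-convex at negative midpoints on [−1,1]. Then for all x_i, x_j, x_d ∈ [−1,1] with x_i < 0 and x_i − x_j = x_d − x_i > 0, one has g(f(x_i) − f(x_j)) > g(f(x_i) − f(x_d)). -/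
theorem abs_sub_lt_abs_sub_of_two_mul_lt {α : Type*} [Field α] [LinearOrder α]
    [IsStrictOrderedRing α] {a b c : α} (hac : a < c) (hb : 2 * b < a + c) :
    |b - a| < |b - c| :=
  calc |b - a| < c - b := abs_sub_lt_iff.mpr ⟨by linarith, by linarith⟩
    _ ≤ |b - c| := abs_sub_comm b c ▸ le_abs_self (c - b)

-- Convexity at the midpoint `xi` of `xj < xd` puts `f xi` nearer to `f xj` than to `f xd`.
theorem stmt_4_general (f g : ℝ → ℝ)
    (hgdec : ∀ a b : ℝ, |a| < |b| → g b < g a)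
    (hfmono : ∀ x ∈ Set.Icc (-1:ℝ) 1, ∀ y ∈ Set.Icc (-1:ℝ) 1, x < y → f x < f y)
    (hfconv : ∀ p ∈ Set.Icc (-1:ℝ) 1, ∀ q ∈ Set.Icc (-1:ℝ) 1,
      q < p → (p + q) / 2 < 0 → f ((p + q) / 2) < (f p + f q) / 2) :
    ∀ xi ∈ Set.Icc (-1:ℝ) 1, ∀ xj ∈ Set.Icc (-1:ℝ) 1, ∀ xd ∈ Set.Icc (-1:ℝ) 1,
      xi < 0 → xi - xj = xd - xi → xi - xj > 0 →
        g (f xi - f xj) > g (f xi - f xd) := by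
  intro xi _ xj hxj xd hxd hneg heq hpos
  have hjd : xj < xd := by linarith
  have hmid : (xd + xj) / 2 = xi := by linarith
  have hconv := hfconv xd hxd xj hxj hjd (hmid ▸ hneg)
  rw [hmid] at hconv
  exact hgdec _ _ <| abs_sub_lt_abs_sub_of_two_mul_lt (hfmono xj hxj xd hxd hjd) (by linarith)

/-- Equidistant case with negative individual opinion (second item of the
asymmetric confirmation bias condition, sufficiency proof of Theorem 1). -/
theorem stmt_4 (f g : ℝ → ℝ)
    (hgsym : ∀ a : ℝ, g a = g (-a))
    (hgdec : ∀ a b : ℝ, |a| < |b| → g b < g a)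
    (hfmono : ∀ x ∈ Set.Icc (-1:ℝ) 1, ∀ y ∈ Set.Icc (-1:ℝ) 1, x < y → f x < f y)
    (hfconv : ∀ p ∈ Set.Icc (-1:ℝ) 1, ∀ q ∈ Set.Icc (-1:ℝ) 1,
      q < p → (p + q) / 2 < 0 → f ((p + q) / 2) < (f p + f q) / 2) :
    ∀ xi ∈ Set.Icc (-1:ℝ) 1, ∀ xj ∈ Set.Icc (-1:ℝ) 1, ∀ xd ∈ Set.Icc (-1:ℝ) 1,
      xi < 0 → xi - xj = xd - xi → xi - xj > 0 →
        g (f xi - f xj) > g (f xi - f xd) :=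
  stmt_4_general f g hgdec hfmono hfconv
end

section
/- Let f, g : ℝ → ℝ with g strictly decreasing in distance and f continuous and strictly increasing on [−1,1]. Let x_i, x_d ∈ [−1,1] satisfy 0 < x_i, x_i < x_d − x_i, and 2·f(x_i) < f(0) + f(x_d). Then there exists x_j ∈ [−1,0) such that |x_i − x_j| < |x_d − x_i| and g(f(x_i) − f(x_j)) > g(f(x_i) − f(x_d)). -/
open Set Filter Topology

/- Take `xj < 0` close to `0`: then `|xi - xj|` is barely more than `xi < xd - xi`, and by
continuity `f xj` is nearly `f 0`, so the outlier condition `f xi - f 0 < f xd - f xi` survives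
as `|f xi - f xj| < f xd - f xi`; since `g` decreases in distance, `xj` gets the larger weight. -/

theorem ContinuousWithinAt.exists_mem_Ioo_lt {f : ℝ → ℝ} {a b c : ℝ}
    (hf : ContinuousWithinAt f (Iio b) b) (hab : a < b) (hc : c < f b) :
    ∃ x ∈ Ioo a b, c < f x :=
  (Filter.Eventually.and (Ioo_mem_nhdsLT hab) (hf.eventually_const_lt hc)).exists

theorem abs_sub_lt_abs_sub_of_lt_of_lt {a b d : ℝ} (hbd : b < d) (hb : 2 * a - d < b) :
    |a - b| < |a - d| :=
  calc |a - b| < d - a := abs_sub_lt_iff.mpr ⟨by linarith, by linarith⟩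
    _ ≤ |a - d| := by rw [abs_sub_comm]; exact le_abs_self _

theorem stmt_6_general (f g : ℝ → ℝ)
    (hgdec : ∀ a b : ℝ, |a| < |b| → g b < g a)
    (hfcont : ContinuousOn f (Set.Icc (-1:ℝ) 1))
    (hfmono : ∀ x ∈ Set.Icc (-1:ℝ) 1, ∀ y ∈ Set.Icc (-1:ℝ) 1, x < y → f x < f y)
    (xi xd : ℝ) (hxd : xd ∈ Set.Icc (-1:ℝ) 1)
    (hpos : 0 < xi) (hfar : xi < xd - xi) (hout : 2 * f xi < f 0 + f xd) :
    ∃ xj ∈ Set.Ico (-1:ℝ) 0, |xi - xj| < |xd - xi| ∧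
      g (f xi - f xj) > g (f xi - f xd) := by
  have hleft : ContinuousWithinAt f (Iio 0) 0 :=
    (hfcont.continuousAt (Icc_mem_nhds (by norm_num) (by norm_num))).continuousWithinAt
  obtain ⟨xj, ⟨hxj_low, hxj_neg⟩, hfxj⟩ :=
    hleft.exists_mem_Ioo_lt (a := max (-1) (2 * xi - xd)) (max_lt (by norm_num) (by linarith))
      (c := 2 * f xi - f xd) (by linarith)
  obtain ⟨hxj_ge, hxj_near⟩ := max_lt_iff.mp hxj_low
  have hxj : xj ∈ Icc (-1) 1 := ⟨hxj_ge.le, by linarith⟩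
  refine ⟨xj, ⟨hxj_ge.le, hxj_neg⟩, ?_, hgdec _ _ ?_⟩
  · rw [abs_of_pos (by linarith), abs_of_pos (by linarith)]
    linarith
  · exact abs_sub_lt_abs_sub_of_lt_of_lt (hfmono xj hxj xd hxd (by linarith)) hfxj

/-- Cross-sign existence claim from the sufficiency proof of Theorem 1: there
exists an opposing-side opinion `xj ∈ [-1,0)` closer to `xi` than `xd` that
receives strictly larger influence weight than `xd`. -/
theorem stmt_6 (f g : ℝ → ℝ)
    (hgsym : ∀ a : ℝ, g a = g (-a))
    (hgdec : ∀ a b : ℝ, |a| < |b| → g b < g a)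
    (hfcont : ContinuousOn f (Set.Icc (-1:ℝ) 1))
    (hfmono : ∀ x ∈ Set.Icc (-1:ℝ) 1, ∀ y ∈ Set.Icc (-1:ℝ) 1, x < y → f x < f y)
    (xi xd : ℝ) (hxi : xi ∈ Set.Icc (-1:ℝ) 1) (hxd : xd ∈ Set.Icc (-1:ℝ) 1)
    (hpos : 0 < xi) (hfar : xi < xd - xi) (hout : 2 * f xi < f 0 + f xd) :
    ∃ xj ∈ Set.Ico (-1:ℝ) 0, |xi - xj| < |xd - xi| ∧
      g (f xi - f xj) > g (f xi - f xd) :=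
  stmt_6_general f g hgdec hfcont hfmono xi xd hxd hpos hfar hout
end

section
/- Let f, g : ℝ → ℝ with g strictly increasing in distance, f strictly increasing on [−1,1], and f strictly midpoint-concave at positive midpoints on [−1,1]. Then for all x̄, x_j, x_d ∈ [−1,1] with x̄ > 0 and x_d − x̄ = x̄ − x_j > 0, one has g(f(x̄) − f(x_j)) > g(f(x̄) − f(x_d)). -/
theorem stmt_8_general (f g : ℝ → ℝ)
    (hginc : ∀ a b : ℝ, |a| < |b| → g a < g b)
    (hfmono : ∀ x ∈ Set.Icc (-1:ℝ) 1, ∀ y ∈ Set.Icc (-1:ℝ) 1, x < y → f x < f y)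
    (hfconc : ∀ p ∈ Set.Icc (-1:ℝ) 1, ∀ q ∈ Set.Icc (-1:ℝ) 1,
      q < p → 0 < (p + q) / 2 → (f p + f q) / 2 < f ((p + q) / 2)) :
    ∀ xbar ∈ Set.Icc (-1:ℝ) 1, ∀ xj ∈ Set.Icc (-1:ℝ) 1, ∀ xd ∈ Set.Icc (-1:ℝ) 1,
      xbar > 0 → xd - xbar = xbar - xj → xd - xbar > 0 →
        g (f xbar - f xj) > g (f xbar - f xd) := by
  intro xbar hbar xj hj xd hd hbar_pos hequi hgap
  have hmid : (xd + xj) / 2 = xbar := by linarith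
  -- concavity at the midpoint `xbar`: the rise from `xbar` to `xd` is smaller than from `xj` to `xbar`
  have hconc := hfconc xd hd xj hj (by linarith) (hmid ▸ hbar_pos)
  rw [hmid] at hconc
  have hfj : f xj < f xbar := hfmono xj hj xbar hbar (by linarith)
  have hfd : f xbar < f xd := hfmono xbar hbar xd hd (by linarith)
  apply hginc
  rw [abs_of_neg (sub_neg.2 hfd), abs_of_pos (sub_pos.2 hfj)]
  linarith

/-- Equidistant case with positive expectation (second item of the asymmetric
negativity bias condition, Theorem 2). -/
theorem stmt_8 (f g : ℝ → ℝ)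
    (hgsym : ∀ a : ℝ, g a = g (-a))
    (hginc : ∀ a b : ℝ, |a| < |b| → g a < g b)
    (hfmono : ∀ x ∈ Set.Icc (-1:ℝ) 1, ∀ y ∈ Set.Icc (-1:ℝ) 1, x < y → f x < f y)
    (hfconc : ∀ p ∈ Set.Icc (-1:ℝ) 1, ∀ q ∈ Set.Icc (-1:ℝ) 1,
      q < p → 0 < (p + q) / 2 → (f p + f q) / 2 < f ((p + q) / 2)) :
    ∀ xbar ∈ Set.Icc (-1:ℝ) 1, ∀ xj ∈ Set.Icc (-1:ℝ) 1, ∀ xd ∈ Set.Icc (-1:ℝ) 1,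
      xbar > 0 → xd - xbar = xbar - xj → xd - xbar > 0 →
        g (f xbar - f xj) > g (f xbar - f xd) :=
  stmt_8_general f g hginc hfmono hfconc
end

section
/- Let f, g : ℝ → ℝ with g strictly increasing in distance, f strictly increasing on [−1,1], and f strictly midpoint-convex at negative midpoints on [−1,1]. Then for all x̄, x_j, x_d ∈ [−1,1] with x̄ < 0 and x_j − x̄ = x̄ − x_d > 0, one has g(f(x̄) − f(x_j)) > g(f(x̄) − f(x_d)). -/
/-! Since `x̄` is the midpoint of `x_d < x_j` and is negative, strict midpoint convexity gives
`f x̄ - f x_d < f x_j - f x̄`; monotonicity makes the left side positive, so `f x̄ - f x_j` is the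
larger of the two differences in absolute value, and `g` increases with distance. -/

theorem abs_sub_lt_abs_sub_of_two_mul_lt_s9 {m u v : ℝ} (hvm : v ≤ m) (hm : 2 * m < u + v) :
    |m - v| < |m - u| := by
  rw [abs_of_nonneg (sub_nonneg.2 hvm), abs_of_neg (by linarith)]
  linarith

theorem stmt_9_general (f g : ℝ → ℝ)
    (hginc : ∀ a b : ℝ, |a| < |b| → g a < g b)
    (hfmono : ∀ x ∈ Set.Icc (-1:ℝ) 1, ∀ y ∈ Set.Icc (-1:ℝ) 1, x < y → f x < f y)
    (hfconv : ∀ p ∈ Set.Icc (-1:ℝ) 1, ∀ q ∈ Set.Icc (-1:ℝ) 1,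
      q < p → (p + q) / 2 < 0 → f ((p + q) / 2) < (f p + f q) / 2) :
    ∀ xbar ∈ Set.Icc (-1:ℝ) 1, ∀ xj ∈ Set.Icc (-1:ℝ) 1, ∀ xd ∈ Set.Icc (-1:ℝ) 1,
      xbar < 0 → xj - xbar = xbar - xd → xj - xbar > 0 →
        g (f xbar - f xj) > g (f xbar - f xd) := by
  intro xbar hbar xj hj xd hd hneg heq hpos
  have hmid : (xj + xd) / 2 = xbar := by linarith
  have hconv : f xbar < (f xj + f xd) / 2 := by
    simpa only [hmid] using hfconv xj hj xd hd (by linarith) (hmid ▸ hneg)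
  have hmono : f xd < f xbar := hfmono xd hd xbar hbar (by linarith)
  exact hginc _ _ (abs_sub_lt_abs_sub_of_two_mul_lt_s9 hmono.le (by linarith))

/-- Equidistant case with negative expectation (second item of the asymmetric
negativity bias condition, Theorem 2). -/
theorem stmt_9 (f g : ℝ → ℝ)
    (hgsym : ∀ a : ℝ, g a = g (-a))
    (hginc : ∀ a b : ℝ, |a| < |b| → g a < g b)
    (hfmono : ∀ x ∈ Set.Icc (-1:ℝ) 1, ∀ y ∈ Set.Icc (-1:ℝ) 1, x < y → f x < f y)
    (hfconv : ∀ p ∈ Set.Icc (-1:ℝ) 1, ∀ q ∈ Set.Icc (-1:ℝ) 1,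
      q < p → (p + q) / 2 < 0 → f ((p + q) / 2) < (f p + f q) / 2) :
    ∀ xbar ∈ Set.Icc (-1:ℝ) 1, ∀ xj ∈ Set.Icc (-1:ℝ) 1, ∀ xd ∈ Set.Icc (-1:ℝ) 1,
      xbar < 0 → xj - xbar = xbar - xd → xj - xbar > 0 →
        g (f xbar - f xj) > g (f xbar - f xd) :=
  stmt_9_general f g hginc hfmono hfconv
end

section
/- Let f, g : ℝ → ℝ with g strictly increasing in distance and f strictly increasing on [−1,1]. Then the following are equivalent: (a) g(f(0) − f(u)) = g(f(0) − f(−u)) for all u ∈ [−1,1]; (b) f(0) = (f(u) + f(−u))/2 for all u ∈ [−1,1]. -/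
lemma abs_eq_abs_of_apply_eq {α β : Type*} [AddCommGroup α] [LinearOrder α] [IsOrderedAddMonoid α]
    [Preorder β] {g : α → β} (hg : ∀ a b : α, |a| < |b| → g a < g b) {a b : α}
    (h : g a = g b) : |a| = |b| :=
  le_antisymm (not_lt.1 fun hlt => (hg _ _ hlt).ne' h) (not_lt.1 fun hlt => (hg _ _ hlt).ne h)

/-- If `f u = f (-u)` then injectivity forces `u = 0`; otherwise `f 0` lies halfway between. -/
lemma eq_midpoint_of_abs_sub_eq {f : ℝ → ℝ} {s : Set ℝ} (hf : s.InjOn f) {u : ℝ} (hu : u ∈ s)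
    (hnu : -u ∈ s) (h : |f 0 - f u| = |f 0 - f (-u)|) : f 0 = (f u + f (-u)) / 2 := by
  rcases abs_eq_abs.1 h with heq | hopp
  · obtain rfl : u = 0 := by linarith [hf hu hnu (by linarith)]
    simp
  · linarith

lemma neg_mem_Icc_neg_one_one {u : ℝ} (hu : u ∈ Set.Icc (-1 : ℝ) 1) : -u ∈ Set.Icc (-1 : ℝ) 1 :=
  ⟨by linarith [hu.2], by linarith [hu.1]⟩

/-- Equivalence between the neutral-expectation symmetry condition on the
influence weight `g (f 0 - f ·)` and midpoint-oddness of `f` (Theorem 2). -/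
theorem stmt_10 (f g : ℝ → ℝ)
    (hgsym : ∀ a : ℝ, g a = g (-a))
    (hginc : ∀ a b : ℝ, |a| < |b| → g a < g b)
    (hfmono : ∀ x ∈ Set.Icc (-1:ℝ) 1, ∀ y ∈ Set.Icc (-1:ℝ) 1, x < y → f x < f y) :
    (∀ u ∈ Set.Icc (-1:ℝ) 1, g (f 0 - f u) = g (f 0 - f (-u))) ↔
    (∀ u ∈ Set.Icc (-1:ℝ) 1, f 0 = (f u + f (-u)) / 2) := by
  have hinj : (Set.Icc (-1 : ℝ) 1).InjOn f := StrictMonoOn.injOn hfmono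
  constructor
  · intro h u hu
    exact eq_midpoint_of_abs_sub_eq hinj hu (neg_mem_Icc_neg_one_one hu)
      (abs_eq_abs_of_apply_eq hginc (h u hu))
  · intro h u hu
    rw [show f 0 - f u = -(f 0 - f (-u)) by linarith [h u hu], ← hgsym]
end

section
/- Let f, g : ℝ → ℝ with g strictly decreasing in distance and f strictly increasing on [−1,1]. Suppose that for all x_i, x_j, x_d ∈ [−1,1] with x_i > 0 and x_j − x_i = x_i − x_d > 0 one has g(f(x_i) − f(x_j)) > g(f(x_i) − f(x_d)). Then for all x_i, x_j, x_d ∈ [−1,1] with x_i > 0 and x_j − x_i = x_i − x_d > 0, one has f(x_i) > (f(x_j) + f(x_d))/2. -/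
/-!
By monotonicity of `f`, `f xi ≤ (f xj + f xd) / 2` would mean `|f xi - f xj| ≥ |f xi - f xd|`,
and a weight that depends only on, and decreases with, the distance cannot then favour `xj`.
-/

theorem abs_lt_abs_of_apply_lt_apply {α β : Type*} [AddCommGroup α] [LinearOrder α]
    [IsOrderedAddMonoid α] [Preorder β] {g : α → β}
    (hgsym : ∀ a, g a = g (-a)) (hgdec : ∀ a b, |a| < |b| → g b < g a)
    {a b : α} (hgab : g b < g a) : |a| < |b| := by
  by_contra! hba
  rcases hba.lt_or_eq with hlt | heq
  · exact lt_asymm hgab (hgdec b a hlt)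
  · rcases abs_eq_abs.mp heq with rfl | rfl
    · exact lt_irrefl _ hgab
    · rw [← hgsym] at hgab
      exact lt_irrefl _ hgab

/-- Necessity direction of Theorem 1 (equidistant case, positive opinion): if the
influence weight favors the same-side opinion among equidistant pairs around any
positive `xi`, then `f` is strictly midpoint-concave at those positive midpoints. -/
theorem stmt_11 (f g : ℝ → ℝ)
    (hgsym : ∀ a : ℝ, g a = g (-a))
    (hgdec : ∀ a b : ℝ, |a| < |b| → g b < g a)
    (hfmono : ∀ x ∈ Set.Icc (-1:ℝ) 1, ∀ y ∈ Set.Icc (-1:ℝ) 1, x < y → f x < f y)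
    (hw : ∀ xi ∈ Set.Icc (-1:ℝ) 1, ∀ xj ∈ Set.Icc (-1:ℝ) 1, ∀ xd ∈ Set.Icc (-1:ℝ) 1,
      xi > 0 → xj - xi = xi - xd → xj - xi > 0 →
        g (f xi - f xj) > g (f xi - f xd)) :
    ∀ xi ∈ Set.Icc (-1:ℝ) 1, ∀ xj ∈ Set.Icc (-1:ℝ) 1, ∀ xd ∈ Set.Icc (-1:ℝ) 1,
      xi > 0 → xj - xi = xi - xd → xj - xi > 0 →
        f xi > (f xj + f xd) / 2 := by
  intro xi hxi xj hxj xd hxd hpos heq hgt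
  have hfd : f xd < f xi := hfmono xd hxd xi hxi (by linarith)
  have hfj : f xi < f xj := hfmono xi hxi xj hxj (sub_pos.mp hgt)
  have hdist := abs_lt_abs_of_apply_lt_apply hgsym hgdec (hw xi hxi xj hxj xd hxd hpos heq hgt)
  rw [abs_of_neg (sub_neg.mpr hfj), abs_of_pos (sub_pos.mpr hfd)] at hdist
  linarith
end

section
/- Let f, g : ℝ → ℝ with g strictly decreasing in distance and f strictly increasing on [−1,1]. Suppose that for all x_i, x_j, x_d ∈ [−1,1] with x_i < 0 and x_i − x_j = x_d − x_i > 0 one has g(f(x_i) − f(x_j)) > g(f(x_i) − f(x_d)). Then for all x_i, x_j, x_d ∈ [−1,1] with x_i < 0 and x_i − x_j = x_d − x_i > 0, one has f(x_i) < (f(x_j) + f(x_d))/2. -/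
/-!
Since `f` is increasing, `f xi - f xj > 0 > f xi - f xd`. A weight that is even and strictly
decreasing in the distance can prefer `xj` to `xd` only if `|f xi - f xj| < |f xi - f xd|`,
i.e. `f xi - f xj < f xd - f xi`, which is the midpoint inequality.
-/

lemma apply_abs_of_even {g : ℝ → ℝ} (hsym : ∀ a, g a = g (-a)) (a : ℝ) : g |a| = g a := by
  rcases abs_choice a with h | h <;> rw [h]
  exact (hsym a).symm

lemma abs_lt_abs_of_apply_lt {g : ℝ → ℝ} (hsym : ∀ a, g a = g (-a))
    (hdec : ∀ a b : ℝ, |a| < |b| → g b < g a) {a b : ℝ} (h : g b < g a) : |a| < |b| := by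
  by_contra! hba
  rcases hba.lt_or_eq with hlt | heq
  · exact (hdec b a hlt).asymm h
  · have : g b = g a := by rw [← apply_abs_of_even hsym a, ← heq, apply_abs_of_even hsym]
    exact h.ne' this.symm

/-- Necessity direction of Theorem 1 (equidistant case, negative opinion): if the
influence weight favors the same-side opinion among equidistant pairs around any
negative `xi`, then `f` is strictly midpoint-convex at those negative midpoints. -/
theorem stmt_12 (f g : ℝ → ℝ)
    (hgsym : ∀ a : ℝ, g a = g (-a))
    (hgdec : ∀ a b : ℝ, |a| < |b| → g b < g a)
    (hfmono : ∀ x ∈ Set.Icc (-1:ℝ) 1, ∀ y ∈ Set.Icc (-1:ℝ) 1, x < y → f x < f y)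
    (hw : ∀ xi ∈ Set.Icc (-1:ℝ) 1, ∀ xj ∈ Set.Icc (-1:ℝ) 1, ∀ xd ∈ Set.Icc (-1:ℝ) 1,
      xi < 0 → xi - xj = xd - xi → xi - xj > 0 →
        g (f xi - f xj) > g (f xi - f xd)) :
    ∀ xi ∈ Set.Icc (-1:ℝ) 1, ∀ xj ∈ Set.Icc (-1:ℝ) 1, ∀ xd ∈ Set.Icc (-1:ℝ) 1,
      xi < 0 → xi - xj = xd - xi → xi - xj > 0 →
        f xi < (f xj + f xd) / 2 := by
  intro xi hxi xj hxj xd hxd hneg heq hpos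
  have hfji : f xj < f xi := hfmono xj hxj xi hxi (by linarith)
  have hfid : f xi < f xd := hfmono xi hxi xd hxd (by linarith)
  have habs := abs_lt_abs_of_apply_lt hgsym hgdec (hw xi hxi xj hxj xd hxd hneg heq hpos)
  rw [abs_of_pos (sub_pos.mpr hfji), abs_of_neg (sub_neg.mpr hfid)] at habs
  linarith
end

section
/- Let f, g : ℝ → ℝ with g strictly increasing in distance and f strictly increasing on [−1,1]. Suppose that for all x̄, x_j, x_d ∈ [−1,1] with x̄ > 0 and x_d − x̄ = x̄ − x_j > 0 one has g(f(x̄) − f(x_j)) > g(f(x̄) − f(x_d)). Then for all x̄, x_j, x_d ∈ [−1,1] with x̄ > 0 and x_d − x̄ = x̄ − x_j > 0, one has f(x̄) > (f(x_j) + f(x_d))/2. -/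
theorem Function.Even.apply_abs {α β : Type*} [AddGroup α] [LinearOrder α] {g : α → β}
    (hg : Function.Even g) (a : α) : g |a| = g a := by
  rcases abs_choice a with h | h <;> rw [h]
  exact hg a

theorem Function.Even.abs_lt_abs_of_apply_lt {α β : Type*} [AddGroup α] [LinearOrder α]
    [LinearOrder β] {g : α → β} (hg : Function.Even g)
    (hginc : ∀ a b : α, |a| < |b| → g a < g b) {a b : α} (h : g a < g b) : |a| < |b| := by
  by_contra! hba
  rcases hba.lt_or_eq with hlt | heq
  · exact (hginc _ _ hlt).asymm h
  · rw [← hg.apply_abs a, ← hg.apply_abs b, heq] at h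
    exact lt_irrefl _ h

/-- Necessity direction of Theorem 2 (equidistant case, positive expectation): if
the influence weight favors the negative-side opinion among equidistant pairs
around any positive `x̄`, then `f` is strictly midpoint-concave at those positive
midpoints. -/
theorem stmt_13 (f g : ℝ → ℝ)
    (hgsym : ∀ a : ℝ, g a = g (-a))
    (hginc : ∀ a b : ℝ, |a| < |b| → g a < g b)
    (hfmono : ∀ x ∈ Set.Icc (-1:ℝ) 1, ∀ y ∈ Set.Icc (-1:ℝ) 1, x < y → f x < f y)
    (hw : ∀ xbar ∈ Set.Icc (-1:ℝ) 1, ∀ xj ∈ Set.Icc (-1:ℝ) 1, ∀ xd ∈ Set.Icc (-1:ℝ) 1,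
      xbar > 0 → xd - xbar = xbar - xj → xd - xbar > 0 →
        g (f xbar - f xj) > g (f xbar - f xd)) :
    ∀ xbar ∈ Set.Icc (-1:ℝ) 1, ∀ xj ∈ Set.Icc (-1:ℝ) 1, ∀ xd ∈ Set.Icc (-1:ℝ) 1,
      xbar > 0 → xd - xbar = xbar - xj → xd - xbar > 0 →
        f xbar > (f xj + f xd) / 2 := by
  intro xbar hxbar xj hxj xd hxd hpos heq hgap
  have hg_even : Function.Even g := fun a => (hgsym a).symm
  have hj : f xj < f xbar := hfmono xj hxj xbar hxbar (by linarith)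
  have hd : f xbar < f xd := hfmono xbar hxbar xd hxd (sub_pos.1 hgap)
  have hdist : |f xbar - f xd| < |f xbar - f xj| :=
    hg_even.abs_lt_abs_of_apply_lt hginc (hw xbar hxbar xj hxj xd hxd hpos heq hgap)
  rw [abs_of_neg (sub_neg.2 hd), abs_of_pos (sub_pos.2 hj)] at hdist
  linarith
end

section
/- Let χ ∈ ℝ and γ > 0, and define c(x,y) = χ − γ·(tanh x − tanh y)². Then for all x_i, x_j, x_d ∈ [−1,1]: (1) if (x_j − x_i)(x_d − x_i) > 0 and |x_j − x_i| < |x_d − x_i| then c(x_i, x_j) > c(x_i, x_d); (2) if |x_j − x_i| = |x_d − x_i| and x_i·x_j > x_i·x_d then c(x_i, x_j) > c(x_i, x_d); (3) c(0, u) = c(0, −u) for all u ∈ [−1,1]. -/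
/-!
Since `γ > 0`, `c xᵢ xⱼ > c xᵢ x_d` says exactly that `tanh xⱼ` is closer to `tanh xᵢ` than
`tanh x_d` is. For opinions on the same side this is the strict monotonicity of `tanh`. For
equidistant opinions `xᵢ + t` and `xᵢ - t` it comes from
`tanh (x + t) + tanh (x - t) = 2 sinh (2x) / (cosh (2x) + cosh (2t))`: as `cosh (2t) > 1 = cosh 0`
the sum lies strictly between `0` and `2 tanh x`, on the side of `0`, so the point pushed
towards `0` moves further in `tanh`. The neutral case is the oddness of `tanh`.
-/

open Real

namespace Real

theorem tanh_strictMono : StrictMono tanh := fun x y hxy =>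
  lt_of_not_ge fun hyx => hxy.not_ge <| by
    simpa only [artanh_tanh] using
      artanh_le_artanh (neg_one_lt_tanh y) (tanh_lt_one x) hyx

theorem tanh_add_tanh (a b : ℝ) :
    tanh a + tanh b = 2 * sinh (a + b) / (cosh (a + b) + cosh (a - b)) := by
  have ha := (cosh_pos a).ne'
  have hb := (cosh_pos b).ne'
  rw [tanh_eq_sinh_div_cosh, tanh_eq_sinh_div_cosh, sinh_add, cosh_add, cosh_sub]
  field_simp
  ring

theorem tanh_add_add_tanh_sub (x t : ℝ) :
    tanh (x + t) + tanh (x - t) = 2 * sinh (2 * x) / (cosh (2 * x) + cosh (2 * t)) := by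
  rw [tanh_add_tanh]
  ring_nf

theorem tanh_add_add_tanh_sub_lt {x t : ℝ} (hx : 0 < x) (ht : t ≠ 0) :
    tanh (x + t) + tanh (x - t) < 2 * tanh x := by
  have h2x : 0 < sinh (2 * x) := sinh_pos_iff.2 (by positivity)
  have hcosh : cosh (2 * 0) < cosh (2 * t) := by
    rw [mul_zero, cosh_zero]
    exact one_lt_cosh.2 (mul_ne_zero two_ne_zero ht)
  calc tanh (x + t) + tanh (x - t)
      = 2 * sinh (2 * x) / (cosh (2 * x) + cosh (2 * t)) := tanh_add_add_tanh_sub x t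
    _ < 2 * sinh (2 * x) / (cosh (2 * x) + cosh (2 * 0)) := by gcongr
    _ = 2 * tanh x := by rw [← tanh_add_add_tanh_sub, add_zero, sub_zero, two_mul]

theorem sq_tanh_sub_tanh_add_lt {x t : ℝ} (hxt : 0 < x * t) :
    (tanh x - tanh (x + t)) ^ 2 < (tanh x - tanh (x - t)) ^ 2 := by
  have ht : t ≠ 0 := by rintro rfl; simp at hxt
  -- Difference of squares; the two factors have the signs of `t` and of `x`.
  suffices 0 < (tanh (x + t) - tanh (x - t)) * (2 * tanh x - (tanh (x + t) + tanh (x - t))) by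
    linear_combination this
  rcases pos_and_pos_or_neg_and_neg_of_mul_pos hxt with ⟨hx, htpos⟩ | ⟨hx, htneg⟩
  · refine mul_pos (sub_pos.2 (tanh_strictMono (by linarith))) ?_
    exact sub_pos.2 (tanh_add_add_tanh_sub_lt hx ht)
  · have hneg := tanh_add_add_tanh_sub_lt (neg_pos.2 hx) (neg_ne_zero.2 ht)
    rw [show -x + -t = -(x + t) by ring, show -x - -t = -(x - t) by ring,
      tanh_neg, tanh_neg, tanh_neg] at hneg
    refine mul_pos_of_neg_of_neg (sub_neg.2 (tanh_strictMono (by linarith))) ?_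
    linarith

end Real

theorem StrictMono.abs_sub_lt_abs_sub_of_same_side {f : ℝ → ℝ} (hf : StrictMono f) {a b d : ℝ}
    (hside : 0 < (b - a) * (d - a)) (hcloser : |b - a| < |d - a|) :
    |f b - f a| < |f d - f a| := by
  rcases pos_and_pos_or_neg_and_neg_of_mul_pos hside with ⟨hb, hd⟩ | ⟨hb, hd⟩
  · rw [abs_of_pos hb, abs_of_pos hd] at hcloser
    rw [abs_of_pos (sub_pos.2 (hf (sub_pos.1 hb))), abs_of_pos (sub_pos.2 (hf (sub_pos.1 hd)))]
    linarith [hf (show b < d by linarith)]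
  · rw [abs_of_neg hb, abs_of_neg hd] at hcloser
    rw [abs_of_neg (sub_neg.2 (hf (sub_neg.1 hb))), abs_of_neg (sub_neg.2 (hf (sub_neg.1 hd)))]
    linarith [hf (show d < b by linarith)]

/-- The example model `c(x,y) = χ - γ (tanh x - tanh y)²` satisfies the
asymmetric confirmation bias conditions. -/
theorem stmt_16 (χ γ : ℝ) (hγ : 0 < γ)
    (c : ℝ → ℝ → ℝ)
    (hc : ∀ x y : ℝ, c x y = χ - γ * (Real.tanh x - Real.tanh y) ^ 2) :
    (∀ xi ∈ Set.Icc (-1:ℝ) 1, ∀ xj ∈ Set.Icc (-1:ℝ) 1, ∀ xd ∈ Set.Icc (-1:ℝ) 1,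
      ((xj - xi) * (xd - xi) > 0 → |xj - xi| < |xd - xi| → c xi xj > c xi xd) ∧
      (|xj - xi| = |xd - xi| → xi * xj > xi * xd → c xi xj > c xi xd)) ∧
    (∀ u ∈ Set.Icc (-1:ℝ) 1, c 0 u = c 0 (-u)) := by
  have hcloser : ∀ xi xj xd : ℝ,
      (tanh xi - tanh xj) ^ 2 < (tanh xi - tanh xd) ^ 2 → c xi xj > c xi xd := by
    intro xi xj xd h
    rw [hc, hc]
    exact sub_lt_sub_left (mul_lt_mul_of_pos_left h hγ) χ
  refine ⟨fun xi _ xj _ xd _ => ⟨fun hside hdist => ?_, fun hdist hown => ?_⟩,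
    fun u _ => by rw [hc, hc, tanh_neg, tanh_zero]; ring⟩
  · apply hcloser
    rw [sq_lt_sq, abs_sub_comm, abs_sub_comm (tanh xi)]
    exact tanh_strictMono.abs_sub_lt_abs_sub_of_same_side hside hdist
  · obtain h | hreflect := abs_eq_abs.1 hdist
    · exact absurd (show xj = xd by linarith) (by rintro rfl; exact lt_irrefl _ hown)
    have hxd : xd = xi - (xj - xi) := by linarith
    have hfurther := sq_tanh_sub_tanh_add_lt (x := xi) (t := xj - xi)
      (by rw [hxd] at hown; nlinarith)
    rw [add_sub_cancel, ← hxd] at hfurther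
    exact hcloser _ _ _ hfurther
end

section
/- Let f, g : ℝ → ℝ with g strictly increasing in distance and f continuous and strictly increasing on [−1,1]. Let x̄, x_j ∈ [−1,1] satisfy 0 < x̄, x̄ < x_j − x̄, and 2·f(x̄) < f(0) + f(x_j). Then there exists x_d ∈ [−1,0) such that |x_d − x̄| < |x_j − x̄| and g(f(x̄) − f(x_j)) > g(f(x̄) − f(x_d)). -/
/-!
Since `2 f(x̄) - f(x_j) < f(0)`, continuity of `f` at `0` gives a negative `x_d` close to `0`
with `f(x̄) - f(x_d) < f(x_j) - f(x̄)`; taking `x_d > 2x̄ - x_j` also makes it closer to `x̄`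
than `x_j`. Monotonicity of `f` puts `f(x̄)` strictly between `f(x_d)` and `f(x_j)`, so the
second inequality compares `|f(x̄) - f(x_d)|` with `|f(x̄) - f(x_j)|`, and `g` preserves it.
-/

theorem ContinuousAt.exists_mem_Ioo_lt_apply {α β : Type*} [TopologicalSpace α] [LinearOrder α]
    [OrderTopology α] [DenselyOrdered α] [TopologicalSpace β] [LinearOrder β]
    [ClosedIicTopology β] {f : α → β} {a b : α} {c : β} (hf : ContinuousAt f a)
    (hc : c < f a) (hb : b < a) : ∃ x ∈ Set.Ioo b a, c < f x :=
  have := nhdsLT_neBot_of_exists_lt ⟨b, hb⟩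
  (Filter.Eventually.and (Ioo_mem_nhdsLT hb)
    ((hf.mono_left nhdsWithin_le_nhds).eventually_const_lt hc)).exists

theorem stmt_19_general (f g : ℝ → ℝ)
    (hginc : ∀ a b : ℝ, |a| < |b| → g a < g b)
    (hfcont : ContinuousOn f (Set.Icc (-1:ℝ) 1))
    (hfmono : ∀ x ∈ Set.Icc (-1:ℝ) 1, ∀ y ∈ Set.Icc (-1:ℝ) 1, x < y → f x < f y)
    (xbar xj : ℝ) (hxbar : xbar ∈ Set.Icc (-1:ℝ) 1) (hxj : xj ∈ Set.Icc (-1:ℝ) 1)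
    (hpos : 0 < xbar) (hfar : xbar < xj - xbar) (hout : 2 * f xbar < f 0 + f xj) :
    ∃ xd ∈ Set.Ico (-1:ℝ) 0, |xd - xbar| < |xj - xbar| ∧
      g (f xbar - f xj) > g (f xbar - f xd) := by
  have hf0 : ContinuousAt f 0 := hfcont.continuousAt (Icc_mem_nhds (by norm_num) (by norm_num))
  obtain ⟨xd, ⟨hxd_lo, hxd_neg⟩, hfxd⟩ := hf0.exists_mem_Ioo_lt_apply
    (show 2 * f xbar - f xj < f 0 by linarith) (show max (-1) (2 * xbar - xj) < 0 by
      rw [max_lt_iff]; constructor <;> linarith)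
  rw [max_lt_iff] at hxd_lo
  have hxd : xd ∈ Set.Icc (-1:ℝ) 1 := ⟨hxd_lo.1.le, by linarith⟩
  have hfd : f xd < f xbar := hfmono xd hxd xbar hxbar (by linarith)
  have hfj : f xbar < f xj := hfmono xbar hxbar xj hxj (by linarith)
  refine ⟨xd, ⟨hxd_lo.1.le, hxd_neg⟩, ?_, hginc _ _ ?_⟩
  · rw [abs_sub_comm, abs_of_pos (by linarith), abs_of_pos (by linarith)]
    linarith
  · rw [abs_sub_comm (f xbar) (f xj), abs_of_pos (sub_pos.2 hfd), abs_of_pos (sub_pos.2 hfj)]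
    linarith

/-- Cross-sign existence claim for the asymmetric negativity bias condition
(Theorem 2): a sufficiently outlying same-side opinion `xj` receives strictly
larger weight than some closer negative-side opinion `xd ∈ [-1,0)`. -/
theorem stmt_19 (f g : ℝ → ℝ)
    (hgsym : ∀ a : ℝ, g a = g (-a))
    (hginc : ∀ a b : ℝ, |a| < |b| → g a < g b)
    (hfcont : ContinuousOn f (Set.Icc (-1:ℝ) 1))
    (hfmono : ∀ x ∈ Set.Icc (-1:ℝ) 1, ∀ y ∈ Set.Icc (-1:ℝ) 1, x < y → f x < f y)
    (xbar xj : ℝ) (hxbar : xbar ∈ Set.Icc (-1:ℝ) 1) (hxj : xj ∈ Set.Icc (-1:ℝ) 1)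
    (hpos : 0 < xbar) (hfar : xbar < xj - xbar) (hout : 2 * f xbar < f 0 + f xj) :
    ∃ xd ∈ Set.Ico (-1:ℝ) 0, |xd - xbar| < |xj - xbar| ∧
      g (f xbar - f xj) > g (f xbar - f xd) :=
  stmt_19_general f g hginc hfcont hfmono xbar xj hxbar hxj hpos hfar hout
end
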